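/- arXiv:2107.13506 — 4 statements merged into one kernel-verified Lean document; each statement's English description precedes it below -/
import Mathlib

section
/- Let G be a finite group and let H ≤ G be a subgroup of minimal cardinality among all subgroups K of G for which the abelianization K/K' has maximal order among all abelian sections of G (i.e., |H/H'| ≥ |A/B| for every pair of subgroups B ⊴ A ≤ G with A/B abelian, and H has minimal order among subgroups with this property). Then H is nilpotent of class at most 2. -/
/-!
Minimality of `H` means that every proper subgroup of `H` has a strictly smaller
abelianization. This property passes to quotients `X ⧸ N` with `N ≤ X'`, and it forces every
supplement of `X'` to be all of `X`; in particular maximal subgroups contain `X'`, so `X` is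
nilpotent. By induction on `|X|`, `γ₃(X) = ⁅X', X⁆` lies in every nontrivial normal subgroup
`N ≤ X'`, so if `γ₃(X) ≠ 1` it is a minimal normal subgroup, hence central of prime order `p`.
Commutation then pairs `X'` with `X` into `γ₃(X)`, each centralizer having index `1` or `p`;
double counting commuting pairs gives `|X : X'| = |D : Z(X) ∩ X'|` for `D = C_X(X')`, while the
three subgroups lemma gives `D' ≤ Z(X) ∩ X'`. So `|D / D'| ≥ |X / X'|`, whence `D = X` and `X'`
is central after all.
-/

open Subgroup
open scoped commutatorElement Finset

section Abelianization

variable {X Y : Type*} [Group X] [Group Y]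

theorem card_abelianization_eq_index : Nat.card (Abelianization X) = (commutator X).index := rfl

theorem map_commutator_of_surjective {f : X →* Y} (hf : Function.Surjective f) :
    (commutator X).map f = commutator Y := by
  rw [map_commutator_eq, MonoidHom.range_eq_top.mpr hf, commutator_def]

theorem card_quotient_lt_card [Finite X] {N : Subgroup X} (hN : N ≠ ⊥) :
    Nat.card (X ⧸ N) < Nat.card X := by
  rw [← N.card_mul_index]
  exact lt_mul_of_one_lt_left (Nat.pos_of_ne_zero index_ne_zero_of_finite)
    ((one_lt_card_iff_ne_bot N).mpr hN)

theorem commutator_commutator_top_le_of_quotient {N : Subgroup X} [N.Normal]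
    (h : commutator (X ⧸ N) ≤ center (X ⧸ N)) : ⁅commutator X, (⊤ : Subgroup X)⁆ ≤ N := by
  have hsurj := QuotientGroup.mk'_surjective N
  rw [← QuotientGroup.ker_mk' N, ← Subgroup.map_eq_bot_iff, map_commutator,
    map_commutator_of_surjective hsurj, map_top_of_surjective _ hsurj,
    commutator_eq_bot_iff_le_centralizer, coe_top, centralizer_univ]
  exact h

theorem commutator_le_commutator_subgroupOf (K : Subgroup X) :
    commutator K ≤ (commutator X).subgroupOf K := by
  rw [subgroupOf, ← map_le_iff_le_comap, map_subtype_commutator, commutator_def]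
  exact commutator_mono le_top le_top

theorem card_abelianization_le_of_surjective [Finite X] {f : X →* Y}
    (hf : Function.Surjective f) :
    Nat.card (Abelianization Y) ≤ Nat.card (Abelianization X) := by
  rw [card_abelianization_eq_index, card_abelianization_eq_index,
    ← map_commutator_of_surjective hf]
  exact Nat.le_of_dvd (Nat.pos_of_ne_zero index_ne_zero_of_finite) (index_map_dvd _ hf)

theorem card_abelianization_quotient {N : Subgroup X} [N.Normal] (hN : N ≤ commutator X) :
    Nat.card (Abelianization (X ⧸ N)) = Nat.card (Abelianization X) := by
  rw [card_abelianization_eq_index, card_abelianization_eq_index,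
    ← map_commutator_of_surjective (QuotientGroup.mk'_surjective N),
    index_map_eq _ (QuotientGroup.mk'_surjective N) (by rwa [QuotientGroup.ker_mk'])]

theorem card_abelianization_le_of_sup_commutator_eq_top [Finite X] {K : Subgroup X}
    (hK : K ⊔ commutator X = ⊤) :
    Nat.card (Abelianization X) ≤ Nat.card (Abelianization K) := by
  have h := relIndex_sup_right (H := K) (K := commutator X)
  rw [hK, relIndex_top_right] at h
  rw [card_abelianization_eq_index, card_abelianization_eq_index, h]
  exact Nat.le_of_dvd (Nat.pos_of_ne_zero index_ne_zero_of_finite)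
    (index_dvd_of_le (commutator_le_commutator_subgroupOf K))

end Abelianization

def HasStrictMaxAbelianization (X : Type*) [Group X] : Prop :=
  ∀ K : Subgroup X, K ≠ ⊤ → Nat.card (Abelianization K) < Nat.card (Abelianization X)

namespace HasStrictMaxAbelianization

variable {X : Type*} [Group X]

theorem eq_top_of_card_abelianization_le (hX : HasStrictMaxAbelianization X) {K : Subgroup X}
    (hK : Nat.card (Abelianization X) ≤ Nat.card (Abelianization K)) : K = ⊤ :=
  by_contra fun h ↦ (hX K h).not_ge hK

theorem eq_top_of_sup_commutator_eq_top [Finite X] (hX : HasStrictMaxAbelianization X)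
    {K : Subgroup X} (hK : K ⊔ commutator X = ⊤) : K = ⊤ :=
  hX.eq_top_of_card_abelianization_le (card_abelianization_le_of_sup_commutator_eq_top hK)

theorem isNilpotent [Finite X] (hX : HasStrictMaxAbelianization X) : Group.IsNilpotent X := by
  refine (Group.isNilpotent_of_finite_tfae.out 0 2).mpr fun M hM ↦ ?_
  by_cases h : commutator X ≤ M
  · exact Normal.of_commutator_le (G := X) h
  · exact absurd (hX.eq_top_of_sup_commutator_eq_top (hM.2 _ (left_lt_sup.mpr h))) hM.1

theorem quotient [Finite X] (hX : HasStrictMaxAbelianization X) {N : Subgroup X} [N.Normal]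
    (hN : N ≤ commutator X) : HasStrictMaxAbelianization (X ⧸ N) := by
  intro K hK
  have hsurj := (QuotientGroup.mk' N).subgroupComap_surjective_of_surjective K
    (QuotientGroup.mk'_surjective N)
  have hK' : K.comap (QuotientGroup.mk' N) ≠ ⊤ := fun h ↦ hK <| by
    rw [← map_comap_eq_self_of_surjective (QuotientGroup.mk'_surjective N) K, h,
      map_top_of_surjective _ (QuotientGroup.mk'_surjective N)]
  calc Nat.card (Abelianization K)
      ≤ Nat.card (Abelianization (K.comap (QuotientGroup.mk' N))) :=
        card_abelianization_le_of_surjective hsurj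
    _ < Nat.card (Abelianization X) := hX _ hK'
    _ = Nat.card (Abelianization (X ⧸ N)) := (card_abelianization_quotient hN).symm

end HasStrictMaxAbelianization

section MinimalNormal

variable {X : Type*} [Group X] {V : Subgroup X}

theorem le_center_of_minimal_normal [V.Normal] (hX : Group.IsNilpotent X)
    (hmin : ∀ N : Subgroup X, N.Normal → N ≠ ⊥ → N ≤ V → V ≤ N) : V ≤ center X := by
  by_cases h : ⁅V, (⊤ : Subgroup X)⁆ = ⊥
  · rwa [commutator_eq_bot_iff_le_centralizer, coe_top, centralizer_univ] at h
  have hVV : V ≤ ⁅V, ⊤⁆ := hmin _ inferInstance h (commutator_le_left _ _)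
  have hlcs : ∀ n, V ≤ (⊤ : Subgroup X).lowerCentralSeries n := by
    intro n
    induction n with
    | zero => exact le_top
    | succ n ih => exact hVV.trans (commutator_mono ih le_rfl)
  obtain ⟨n, hn⟩ := Subgroup.nilpotent_iff_lowerCentralSeries.mp hX
  exact (hn ▸ hlcs n).trans bot_le

theorem prime_card_of_minimal_normal_of_le_center [Finite X] (hV : V ≠ ⊥) (hVZ : V ≤ center X)
    (hmin : ∀ N : Subgroup X, N.Normal → N ≠ ⊥ → N ≤ V → V ≤ N) : (Nat.card V).Prime := by
  obtain ⟨p, hp, hpV⟩ := Nat.exists_prime_and_dvd ((one_lt_card_iff_ne_bot V).mpr hV).ne'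
  have : Fact p.Prime := ⟨hp⟩
  obtain ⟨x, hx⟩ := exists_prime_orderOf_dvd_card' (G := V) p hpV
  have hxV : zpowers (x : X) ≤ V := zpowers_le.mpr x.2
  have hnormal : (zpowers (x : X)).Normal :=
    ⟨fun n hn g ↦ by rwa [mem_center_iff.mp (hVZ (hxV hn)) g, mul_inv_cancel_right]⟩
  have hne : zpowers (x : X) ≠ ⊥ := by
    rw [Ne, zpowers_eq_bot, ← orderOf_eq_one_iff, orderOf_coe, hx]
    exact hp.ne_one
  rwa [le_antisymm (hmin _ hnormal hne hxV) hxV, Nat.card_zpowers, orderOf_coe, hx]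

end MinimalNormal

section Counting

open Finset

variable {α β : Type*} [Fintype α] [Fintype β] (r : α → β → Prop) [∀ a b, Decidable (r a b)]
  {p : ℕ}

theorem sum_card_filter_mul_add_eq_of_fibers
    (hα : ∀ a, #{b | r a b} = Fintype.card β ∨ #{b | r a b} * p = Fintype.card β) :
    (∑ a, #{b | r a b}) * p + #{a | ∀ b, r a b} * Fintype.card β =
      Fintype.card α * Fintype.card β + #{a | ∀ b, r a b} * Fintype.card β * p := by
  have hfiber : ∀ a, #{b | r a b} * p + (if ∀ b, r a b then Fintype.card β else 0) =
      Fintype.card β + (if ∀ b, r a b then Fintype.card β * p else 0) := by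
    intro a
    split_ifs with h
    · rw [filter_true_of_mem fun b _ ↦ h b, card_univ, add_comm]
    · have hne : #{b | r a b} ≠ Fintype.card β := fun he ↦
        h fun b ↦ (filter_eq_self.mp (eq_univ_of_card _ he) b (mem_univ b))
      simpa using (hα a).resolve_left hne
  have := sum_congr rfl fun a (_ : a ∈ univ) ↦ hfiber a
  simp only [sum_add_distrib, ← sum_mul, sum_ite, sum_const, smul_eq_mul, card_univ] at this
  linarith

theorem card_filter_forall_mul_card_eq_of_fibers (hp : p ≠ 1)
    (hα : ∀ a, #{b | r a b} = Fintype.card β ∨ #{b | r a b} * p = Fintype.card β)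
    (hβ : ∀ b, #{a | r a b} = Fintype.card α ∨ #{a | r a b} * p = Fintype.card α) :
    #{a | ∀ b, r a b} * Fintype.card β = #{b | ∀ a, r a b} * Fintype.card α := by
  have hα' := sum_card_filter_mul_add_eq_of_fibers r hα
  have hβ' := sum_card_filter_mul_add_eq_of_fibers (fun b a ↦ r a b) hβ
  have hswap : ∑ a, #{b | r a b} = ∑ b, #{a | r a b} := by
    simp only [card_filter]
    exact sum_comm
  rw [hswap] at hα'
  have : ((#{a | ∀ b, r a b} * Fintype.card β : ℕ) - (#{b | ∀ a, r a b} * Fintype.card α : ℕ) : ℤ)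
      * (p - 1) = 0 := by
    zify at hα' hβ'
    push_cast
    linear_combination hβ' - hα'
  rcases mul_eq_zero.mp this with h | h
  · exact_mod_cast sub_eq_zero.mp h
  · exact absurd (by exact_mod_cast sub_eq_zero.mp h) hp

end Counting

theorem card_ker_eq_or_card_ker_mul_eq {Y V : Type*} [Group Y] [Group V] [Finite Y] (f : Y →* V)
    (hV : (Nat.card V).Prime) :
    Nat.card f.ker = Nat.card Y ∨ Nat.card f.ker * Nat.card V = Nat.card Y := by
  have : Finite V := Nat.finite_of_card_ne_zero hV.ne_zero
  rw [← f.ker.card_mul_index, index_ker]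
  rcases hV.eq_one_or_self_of_dvd _ (card_subgroup_dvd_card f.range) with h | h
  · exact .inl (by rw [h, mul_one])
  · exact .inr (by rw [h])

section CentralCommutators

variable {X : Type*} [Group X] {V : Subgroup X}

def commutatorRightHom (hV : V ≤ center X) (a : X) (ha : ∀ g, ⁅a, g⁆ ∈ V) : X →* V where
  toFun g := ⟨⁅a, g⁆, ha g⟩
  map_one' := by simp
  map_mul' g h := by
    ext
    have hcomm : g * ⁅a, h⁆ * g⁻¹ = ⁅a, h⁆ := by
      rw [mem_center_iff.mp (hV (ha h)) g, mul_inv_cancel_right]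
    calc ⁅a, g * h⁆ = ⁅a, g⁆ * (g * ⁅a, h⁆ * g⁻¹) := by group
      _ = ⁅a, g⁆ * ⁅a, h⁆ := by rw [hcomm]

def commutatorLeftHom (hV : V ≤ center X) {A : Subgroup X} (g : X) (hg : ∀ a ∈ A, ⁅a, g⁆ ∈ V) :
    A →* V where
  toFun a := ⟨⁅(a : X), g⁆, hg a a.2⟩
  map_one' := by simp
  map_mul' a b := by
    ext
    have hcomm : (a : X) * ⁅(b : X), g⁆ * (a : X)⁻¹ = ⁅(b : X), g⁆ := by
      rw [mem_center_iff.mp (hV (hg b b.2)) a, mul_inv_cancel_right]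
    calc ⁅(a : X) * b, g⁆ = (a * ⁅(b : X), g⁆ * (a : X)⁻¹) * ⁅(a : X), g⁆ := by group
      _ = ⁅(a : X), g⁆ * ⁅(b : X), g⁆ := by
        rw [hcomm, mem_center_iff.mp (hV (hg a a.2)) ⁅(b : X), g⁆]

theorem mem_ker_commutatorRightHom_iff (hV : V ≤ center X) {a : X} (ha : ∀ g, ⁅a, g⁆ ∈ V)
    {g : X} : g ∈ (commutatorRightHom hV a ha).ker ↔ Commute a g := by
  rw [MonoidHom.mem_ker, ← commutatorElement_eq_one_iff_commute, ← Subtype.val_inj]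
  rfl

theorem mem_ker_commutatorLeftHom_iff (hV : V ≤ center X) {A : Subgroup X} {g : X}
    (hg : ∀ a ∈ A, ⁅a, g⁆ ∈ V) {a : A} :
    a ∈ (commutatorLeftHom hV g hg).ker ↔ Commute (a : X) g := by
  rw [MonoidHom.mem_ker, ← commutatorElement_eq_one_iff_commute, ← Subtype.val_inj]
  rfl

end CentralCommutators

section ClassThree

variable {X : Type*} [Group X]

theorem card_center_inf_commutator_mul_card_eq [Finite X]
    (hVZ : ⁅commutator X, (⊤ : Subgroup X)⁆ ≤ center X)
    (hp : (Nat.card ↥⁅commutator X, (⊤ : Subgroup X)⁆).Prime) :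
    Nat.card (center X ⊓ commutator X : Subgroup X) * Nat.card X =
      Nat.card (centralizer (commutator X : Set X)) * Nat.card (commutator X) := by
  classical
  have := Fintype.ofFinite X
  have hmem : ∀ a ∈ commutator X, ∀ g, ⁅a, g⁆ ∈ ⁅commutator X, (⊤ : Subgroup X)⁆ :=
    fun a ha g ↦ commutator_mem_commutator ha (mem_top g)
  -- count the commuting pairs in `X' × X`: both families of centralizers are kernels of
  -- homomorphisms into a group of order `p`
  have hcount := card_filter_forall_mul_card_eq_of_fibers
    (fun (a : commutator X) (g : X) ↦ Commute (a : X) g) hp.ne_one ?_ ?_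
  · have hW : Nat.card (center X ⊓ commutator X : Subgroup X) =
        #{a : commutator X | ∀ g, Commute (a : X) g} := by
      rw [← Nat.card_congr (subgroupOfEquivOfLe inf_le_right).toEquiv, inf_subgroupOf_right,
        ← Fintype.card_subtype, ← Nat.card_eq_fintype_card]
      exact Nat.card_congr <| Equiv.subtypeEquivRight fun a ↦ by
        rw [mem_subgroupOf, mem_center_iff]
        exact forall_congr' fun g ↦ eq_comm
    have hD : Nat.card (centralizer (commutator X : Set X)) =
        #{g | ∀ a : commutator X, Commute (a : X) g} := by
      rw [← Fintype.card_subtype, ← Nat.card_eq_fintype_card]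
      exact Nat.card_congr <| Equiv.subtypeEquivRight fun g ↦ by
        rw [mem_centralizer_iff, Subtype.forall]
        rfl
    rw [hW, hD, Nat.card_eq_fintype_card, Nat.card_eq_fintype_card]
    exact hcount
  · intro a
    have := card_ker_eq_or_card_ker_mul_eq (commutatorRightHom hVZ a (hmem a a.2)) hp
    rwa [Nat.card_congr (Equiv.subtypeEquivRight fun g ↦ mem_ker_commutatorRightHom_iff hVZ _),
      Nat.card_eq_fintype_card, Fintype.card_subtype, Nat.card_eq_fintype_card] at this
  · intro g
    have := card_ker_eq_or_card_ker_mul_eq (commutatorLeftHom hVZ g fun a ha ↦ hmem a ha g) hp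
    rwa [Nat.card_congr (Equiv.subtypeEquivRight fun a ↦ mem_ker_commutatorLeftHom_iff hVZ _),
      Nat.card_eq_fintype_card, Fintype.card_subtype, Nat.card_eq_fintype_card] at this


theorem card_abelianization_le_card_abelianization_centralizer [Finite X]
    (hVZ : ⁅commutator X, (⊤ : Subgroup X)⁆ ≤ center X)
    (hp : (Nat.card ↥⁅commutator X, (⊤ : Subgroup X)⁆).Prime) :
    Nat.card (Abelianization X) ≤
      Nat.card (Abelianization (centralizer (commutator X : Set X))) := by
  set D := centralizer (commutator X : Set X)
  set W := center X ⊓ commutator X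
  have hDW : commutator D ≤ W.subgroupOf D := by
    rw [subgroupOf, ← map_le_iff_le_comap, map_subtype_commutator]
    refine le_inf (commutator_centralizer_commutator_le_center X) ?_
    rw [commutator_def]
    exact commutator_mono le_top le_top
  have hindex : (commutator X).index = W.relIndex D := by
    have hcount := card_center_inf_commutator_mul_card_eq hVZ hp
    have hW := relIndex_mul_index (inf_le_left.trans (center_le_centralizer _) : W ≤ D)
    have h1 := W.card_mul_index
    have h2 := D.card_mul_index
    have h3 := (commutator X).card_mul_index
    have hpos : 0 < Nat.card (commutator X) * Nat.card W * D.index :=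
      Nat.pos_of_ne_zero (by simp [index_ne_zero_of_finite, Nat.card_pos.ne'])
    -- both sides equal `|X| * |X'|`
    refine Nat.eq_of_mul_eq_mul_right hpos ?_
    zify at *
    linear_combination (Nat.card W * D.index : ℤ) * h3 + (D.index : ℤ) * hcount
      + (Nat.card (commutator X) : ℤ) * h2 - (Nat.card (commutator X) * Nat.card W : ℤ) * hW
      - (Nat.card (commutator X) : ℤ) * h1
  rw [card_abelianization_eq_index, card_abelianization_eq_index, hindex]
  exact Nat.le_of_dvd (Nat.pos_of_ne_zero index_ne_zero_of_finite) (index_dvd_of_le hDW)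

end ClassThree

theorem HasStrictMaxAbelianization.commutator_le_center {X : Type*} [Group X] [Finite X]
    (hX : HasStrictMaxAbelianization X) : commutator X ≤ center X := by
  induction h : Nat.card X using Nat.strong_induction_on generalizing X with
  | _ n ih =>
    subst h
    set V := ⁅commutator X, (⊤ : Subgroup X)⁆
    have hmin : ∀ N : Subgroup X, N.Normal → N ≠ ⊥ → N ≤ V → V ≤ N := fun N _ hN hNV ↦
      commutator_commutator_top_le_of_quotient
        (ih _ (card_quotient_lt_card hN) (hX.quotient (hNV.trans (commutator_le_left _ _))) rfl)
    by_contra hne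
    have hV : V ≠ ⊥ := by
      rwa [Ne, commutator_eq_bot_iff_le_centralizer, coe_top, centralizer_univ]
    have hVZ := le_center_of_minimal_normal hX.isNilpotent hmin
    have hp := prime_card_of_minimal_normal_of_le_center hV hVZ hmin
    have hD := hX.eq_top_of_card_abelianization_le
      (card_abelianization_le_card_abelianization_centralizer hVZ hp)
    exact hne (centralizer_eq_top_iff_subset.mp hD)

/-- Let `G` be a finite group and `H ≤ G` a subgroup of minimal cardinality among all
subgroups `K` of `G` whose abelianization `K/K'` has maximal order among all abelian
sections `A/B` (`B ⊴ A ≤ G`, `A/B` abelian) of `G`.  Then `H` is nilpotent of class at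
most 2, i.e. its derived subgroup is contained in its center. -/
theorem nilpotent_class_two_of_minimal_maximal_abelianization {G : Type*} [Group G] [Fintype G]
    (H : Subgroup G)
    (hmax : ∀ (A : Subgroup G) (B : Subgroup A), B.Normal → commutator ↥A ≤ B →
      Nat.card (↥A ⧸ B) ≤ Nat.card (Abelianization ↥H))
    (hmin : ∀ K : Subgroup G,
      (∀ (A : Subgroup G) (B : Subgroup A), B.Normal → commutator ↥A ≤ B →
        Nat.card (↥A ⧸ B) ≤ Nat.card (Abelianization ↥K)) →
      Nat.card H ≤ Nat.card K) :
    commutator ↥H ≤ Subgroup.center ↥H := by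
  refine HasStrictMaxAbelianization.commutator_le_center fun K hK ↦ ?_
  by_contra! hle
  have e : K ≃* K.map H.subtype := K.equivMapOfInjective _ H.subtype_injective
  have hK' : Nat.card (Abelianization K) = Nat.card (Abelianization (K.map H.subtype)) :=
    Nat.card_congr e.abelianizationCongr.toEquiv
  have hcard := hmin _ fun A B hB hAB ↦ (hmax A B hB hAB).trans (hle.trans hK'.le)
  exact hK (eq_top_of_le_card K (hcard.trans (Nat.card_congr e.toEquiv).ge))
end

section
/- Let G be a finite group and let H ≤ G be a subgroup of minimal cardinality among all subgroups K of G for which the abelianization K/K' has maximal order among all abelian sections of G. Then H is nilpotent. -/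
/-! A subgroup `M` of `H` with `M ⊔ H' = H` has an abelianization at least as large as that of
`H`, so its image in `G` again realises the maximal order of an abelian section, and minimality
of `|H|` forces `M = H`. Hence every maximal subgroup of `H` contains `H'`, so it is normal, and a
finite group all of whose maximal subgroups are normal is nilpotent. -/

open Subgroup

namespace Abelianization

variable {G : Type*} [Group G]

theorem map_subtype_surjective_of_sup_commutator_eq_top {M : Subgroup G}
    (hM : M ⊔ commutator G = ⊤) : Function.Surjective (map M.subtype) := by
  intro x
  induction x using QuotientGroup.induction_on with | H g => ?_
  obtain ⟨m, hm, c, hc, rfl⟩ := mem_sup_of_normal_right.mp (hM ▸ mem_top g)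
  have hc1 : of c = 1 := commutator_subset_ker of hc
  exact ⟨of ⟨m, hm⟩, show of m = of (m * c) by rw [map_mul, hc1, mul_one]⟩

theorem card_le_card_of_sup_commutator_eq_top [Finite G] {M : Subgroup G}
    (hM : M ⊔ commutator G = ⊤) : Nat.card (Abelianization G) ≤ Nat.card (Abelianization M) :=
  Nat.card_le_card_of_surjective _ (map_subtype_surjective_of_sup_commutator_eq_top hM)

end Abelianization

theorem Group.isNilpotent_of_forall_sup_commutator_eq_top {G : Type*} [Group G] [Finite G]
    (h : ∀ M : Subgroup G, M ⊔ commutator G = ⊤ → M = ⊤) : Group.IsNilpotent G := by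
  refine ((isNilpotent_of_finite_tfae (G := G)).out 0 2).mpr fun M hM => ?_
  apply Normal.of_commutator_le
  rcases hM.le_iff.mp (le_sup_left : M ≤ M ⊔ commutator G) with hsup | hsup
  · exact absurd (h M hsup) hM.1
  · exact hsup ▸ le_sup_right

/-- Let `G` be a finite group and `H ≤ G` a subgroup of minimal cardinality among all
subgroups `K` of `G` whose abelianization `K/K'` has maximal order among all abelian
sections `A/B` (`B ⊴ A ≤ G`, `A/B` abelian) of `G`.  Then `H` is nilpotent. -/
theorem nilpotent_of_minimal_maximal_abelianization {G : Type*} [Group G] [Fintype G]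
    (H : Subgroup G)
    (hmax : ∀ (A : Subgroup G) (B : Subgroup A), B.Normal → commutator ↥A ≤ B →
      Nat.card (↥A ⧸ B) ≤ Nat.card (Abelianization ↥H))
    (hmin : ∀ K : Subgroup G,
      (∀ (A : Subgroup G) (B : Subgroup A), B.Normal → commutator ↥A ≤ B →
        Nat.card (↥A ⧸ B) ≤ Nat.card (Abelianization ↥K)) →
      Nat.card H ≤ Nat.card K) :
    Group.IsNilpotent ↥H := by
  refine Group.isNilpotent_of_forall_sup_commutator_eq_top fun M hM => eq_top_of_le_card M ?_
  let K : Subgroup G := M.map H.subtype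
  have hcard : Nat.card (Abelianization H) ≤ Nat.card (Abelianization K) :=
    calc Nat.card (Abelianization H) ≤ Nat.card (Abelianization M) :=
          Abelianization.card_le_card_of_sup_commutator_eq_top hM
      _ = Nat.card (Abelianization K) :=
          Nat.card_congr (M.equivMapOfInjective _ H.subtype_injective).abelianizationCongr.toEquiv
  calc Nat.card H ≤ Nat.card K := hmin K fun A B hB hAB => (hmax A B hB hAB).trans hcard
    _ = Nat.card M := card_map_of_injective H.subtype_injective
end

section
/- Let p be a prime and let G be a finite group of order p^n with n ≥ 2. Then G has an abelian section of size at least p^(n/log₂ n), i.e., there exist subgroups B ⊴ A ≤ G with A/B abelian and |A/B| ≥ p^(n/log₂ n). -/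
/-!
Let `γᵢ` be the lower central series of `G`, with `|γᵢ| = p ^ eᵢ`. Since `[γᵢ, γⱼ] ≤ γᵢ₊ⱼ₊₁`,
every `γᵢ/γ₂ᵢ₊₁` is an abelian section, and so is `γᵢ/γ₂ᵢ₊₂` when `|γᵢ : γᵢ₊₁| = p` (a group
that is cyclic modulo a central subgroup is abelian). If all abelian sections have order at most
`p ^ M`, then `e` drops by at most `M` along the indices `0, 1, 3, …, 2 ^ t - 1`, and since `e`
decreases strictly until it vanishes, it vanishes already at `2M`. Hence `n ≤ M t` with
`2 ^ t ≤ 4M`, so `2 ^ n ≤ (4M) ^ M`, which gives `2 ^ n ≤ n ^ M`, i.e. `M ≥ n / log₂ n`, once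
`n ≥ 16`; below that, the sections `γᵢ/γ₂ᵢ₊₂` rule out the few remaining profiles.
-/

namespace Subgroup

variable {G : Type*} [Group G]

theorem commutator_le_of_rotate {H₁ H₂ H₃ N : Subgroup G} [N.Normal]
    (h₁ : ⁅⁅H₂, H₃⁆, H₁⁆ ≤ N) (h₂ : ⁅⁅H₃, H₁⁆, H₂⁆ ≤ N) : ⁅⁅H₁, H₂⁆, H₃⁆ ≤ N := by
  have key (A B C : Subgroup G) : ⁅⁅A, B⁆, C⁆ ≤ N ↔
      ⁅⁅A.map (QuotientGroup.mk' N), B.map (QuotientGroup.mk' N)⁆,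
        C.map (QuotientGroup.mk' N)⁆ = ⊥ := by
    rw [← map_commutator, ← map_commutator, map_eq_bot_iff, QuotientGroup.ker_mk']
  rw [key] at *
  exact commutator_commutator_eq_bot_of_rotate h₁ h₂

theorem commutator_lowerCentralSeries_le (i j : ℕ) :
    ⁅lowerCentralSeries (⊤ : Subgroup G) i, lowerCentralSeries (⊤ : Subgroup G) j⁆ ≤
      lowerCentralSeries (⊤ : Subgroup G) (i + j + 1) := by
  induction j generalizing i with
  | zero => rfl
  | succ j ih =>
    rw [lowerCentralSeries_succ, commutator_comm]
    apply commutator_le_of_rotate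
    · rw [commutator_comm ⊤, ← lowerCentralSeries_succ]
      simpa only [Nat.add_right_comm i 1, add_assoc] using ih (i + 1)
    · calc ⁅⁅lowerCentralSeries ⊤ i, lowerCentralSeries ⊤ j⁆, ⊤⁆
          ≤ ⁅lowerCentralSeries (⊤ : Subgroup G) (i + j + 1), ⊤⁆ := commutator_mono (ih i) le_rfl
        _ = lowerCentralSeries ⊤ (i + (j + 1) + 1) := by rw [← lowerCentralSeries_succ]; ring_nf

theorem lowerCentralSeries_eq_bot_of_succ_eq [Group.IsNilpotent G] {i : ℕ}
    (h : lowerCentralSeries (⊤ : Subgroup G) (i + 1) = lowerCentralSeries ⊤ i) :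
    lowerCentralSeries (⊤ : Subgroup G) i = ⊥ := by
  have hconst : ∀ k, lowerCentralSeries (⊤ : Subgroup G) (i + k) = lowerCentralSeries ⊤ i := by
    intro k
    induction k with
    | zero => rfl
    | succ k ih => rw [← add_assoc, lowerCentralSeries_succ, ih, ← lowerCentralSeries_succ, h]
  obtain ⟨k, hk⟩ := nilpotent_iff_lowerCentralSeries.mp ‹Group.IsNilpotent G›
  rw [← hconst k, eq_bot_iff, ← hk]
  exact lowerCentralSeries_antitone _ (Nat.le_add_left k i)

theorem commutator_le_of_eq_zpowers_sup {H K N : Subgroup G} [N.Normal] {x : G}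
    (hH : H = zpowers x ⊔ K) (hHK : ⁅H, K⁆ ≤ N) : ⁅H, H⁆ ≤ N := by
  have key (A B : Subgroup G) : ⁅A, B⁆ ≤ N ↔
      A.map (QuotientGroup.mk' N) ≤ centralizer (B.map (QuotientGroup.mk' N)) := by
    rw [← commutator_eq_bot_iff_le_centralizer, ← map_commutator, map_eq_bot_iff,
      QuotientGroup.ker_mk']
  subst hH
  rw [key] at *
  rw [map_sup, MonoidHom.map_zpowers] at *
  refine sup_le ?_ (le_centralizer_iff.mp hHK)
  rw [le_centralizer_iff]
  refine sup_le ?_ (le_centralizer_iff.mp (le_sup_left.trans hHK))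
  exact le_centralizer_iff_isMulCommutative.mpr inferInstance

theorem exists_eq_zpowers_sup_of_relIndex_prime {H K : Subgroup G} (hKH : K ≤ H)
    (hp : (K.relIndex H).Prime) : ∃ x, H = zpowers x ⊔ K := by
  obtain ⟨x, hxH, hxK⟩ : ∃ x ∈ H, x ∉ K := by
    by_contra! h
    exact hp.ne_one (relIndex_eq_one.mpr h)
  refine ⟨x, le_antisymm ?_ (sup_le (zpowers_le.mpr hxH) hKH)⟩
  have hK : K ≤ zpowers x ⊔ K := le_sup_right
  have hmul := relIndex_mul_relIndex K (zpowers x ⊔ K) H hK (sup_le (zpowers_le.mpr hxH) hKH)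
  rcases (Nat.prime_mul_iff.mp (hmul ▸ hp)) with ⟨-, h⟩ | ⟨-, h⟩
  · exact relIndex_eq_one.mp h
  · exact absurd (relIndex_eq_one.mp h (mem_sup_left (mem_zpowers x))) hxK

theorem commutator_le_subgroupOf {A N : Subgroup G} (h : ⁅A, A⁆ ≤ N) :
    _root_.commutator A ≤ N.subgroupOf A := by
  rw [← map_subtype_le_map_subtype, map_subtype_commutator, subgroupOf_map_subtype]
  exact le_inf h (commutator_le_self A)

end Subgroup

/-- The constraints satisfied by `e i = log_p |γᵢ|`, where `γ₀ = G, γ₁ = [G, G], …` is the lower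
central series of a nilpotent `p`-group all of whose abelian sections have order at most
`p ^ M`. -/
structure LowerCentralProfile (e : ℕ → ℕ) (M : ℕ) : Prop where
  antitone : Antitone e
  eq_zero_of_succ_eq : ∀ i, e (i + 1) = e i → e i = 0
  le_add : ∀ i, e i ≤ e (2 * i + 1) + M
  le_add_of_eq_succ_add_one : ∀ i, e i = e (i + 1) + 1 → e i ≤ e (2 * i + 2) + M

theorem Nat.two_mul_lt_two_pow {n : ℕ} (hn : 2 < n) : 2 * n < 2 ^ n := by
  induction n, hn using Nat.le_induction with
  | base => norm_num
  | succ n _ ih => rw [pow_succ]; omega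

namespace LowerCentralProfile

variable {e : ℕ → ℕ} {M : ℕ} (h : LowerCentralProfile e M)
include h

theorem succ_le (i : ℕ) : e (i + 1) ≤ e i := h.antitone (Nat.le_add_right i 1)

theorem succ_lt {i : ℕ} (hi : 0 < e (i + 1)) : e (i + 1) < e i := by
  have := h.succ_le i
  have := h.eq_zero_of_succ_eq i
  omega

theorem add_le {i k : ℕ} (hk : 0 < e (i + k)) : e (i + k) + k ≤ e i := by
  induction k with
  | zero => rfl
  | succ k ih =>
    simp only [← add_assoc] at hk ⊢
    have hlt := h.succ_lt (i := i + k) hk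
    have := ih (by omega)
    omega

theorem eq_zero_two_mul : e (2 * M) = 0 := by
  by_contra! hpos
  have h₁ := h.add_le (i := M) (k := M) (by rw [← two_mul]; omega)
  have h₂ := h.eq_zero_of_succ_eq (2 * M)
  have h₃ := h.le_add M
  have h₄ := h.succ_le (2 * M)
  rw [← two_mul] at h₁
  omega

theorem le_mul_add (t : ℕ) : e 0 ≤ M * t + e (2 ^ t - 1) := by
  induction t with
  | zero => simp
  | succ t ih =>
    have hidx : 2 * (2 ^ t - 1) + 1 = 2 ^ (t + 1) - 1 := by
      have := Nat.one_le_two_pow (n := t)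
      rw [pow_succ]; omega
    have := h.le_add (2 ^ t - 1)
    rw [hidx] at this
    rw [mul_add_one]
    omega

theorem le_mul_of_two_mul_lt {t : ℕ} (ht : 2 * M < 2 ^ t) : e 0 ≤ M * t := by
  have hzero : e (2 ^ t - 1) = 0 :=
    Nat.eq_zero_of_le_zero (h.eq_zero_two_mul ▸ h.antitone (by omega))
  simpa [hzero] using h.le_mul_add t

theorem two_pow_le : 2 ^ e 0 ≤ (4 * M) ^ M := by
  rcases M.eq_zero_or_pos with rfl | hM
  · simp [h.eq_zero_two_mul]
  set t := Nat.log 2 (2 * M) + 1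
  have hlt : 2 * M < 2 ^ t := Nat.lt_pow_succ_log_self one_lt_two _
  have hle : 2 ^ t ≤ 4 * M := by
    have := Nat.pow_log_le_self 2 (x := 2 * M) (by omega)
    rw [pow_succ]; omega
  calc 2 ^ e 0 ≤ 2 ^ (M * t) := Nat.pow_le_pow_right two_pos (h.le_mul_of_two_mul_lt hlt)
    _ = (2 ^ t) ^ M := by rw [mul_comm, pow_mul]
    _ ≤ (4 * M) ^ M := Nat.pow_le_pow_left hle M

theorem le_sq : e 0 ≤ M ^ 2 := by
  rcases le_or_gt M 2 with hM | hM
  -- `e` vanishes from index `4` on, and the constraints on `e 0, …, e 3` leave no room.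
  · have h4 : e 4 = 0 := Nat.eq_zero_of_le_zero (h.eq_zero_two_mul ▸ h.antitone (by omega))
    have h5 : e 5 = 0 := Nat.eq_zero_of_le_zero (h4 ▸ h.antitone (by omega))
    have h7 : e 7 = 0 := Nat.eq_zero_of_le_zero (h4 ▸ h.antitone (by omega))
    have a0 := h.succ_le 0; have a1 := h.succ_le 1; have a2 := h.succ_le 2; have a3 := h.succ_le 3
    have z0 := h.eq_zero_of_succ_eq 0; have z1 := h.eq_zero_of_succ_eq 1
    have z2 := h.eq_zero_of_succ_eq 2; have z3 := h.eq_zero_of_succ_eq 3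
    have d0 := h.le_add 0; have d1 := h.le_add 1; have d2 := h.le_add 2; have d3 := h.le_add 3
    have c0 := h.le_add_of_eq_succ_add_one 0; have c1 := h.le_add_of_eq_succ_add_one 1
    have c2 := h.le_add_of_eq_succ_add_one 2
    simp only [Nat.reduceMul, Nat.reduceAdd] at *
    interval_cases M <;> omega
  · simpa [sq] using h.le_mul_of_two_mul_lt (Nat.two_mul_lt_two_pow hM)

theorem two_pow_le_pow (h2 : 2 ≤ e 0) : 2 ^ e 0 ≤ e 0 ^ M := by
  have hsq := h.le_sq
  have hpow := h.two_pow_le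
  generalize e 0 = n at *
  rcases le_or_gt 16 n with hn | hn
  · rcases le_or_gt (4 * M) n with hM | hM
    · exact hpow.trans (Nat.pow_le_pow_left hM M)
    · calc 2 ^ n ≤ 2 ^ (4 * M) := Nat.pow_le_pow_right two_pos hM.le
        _ = 16 ^ M := by rw [pow_mul]; norm_num
        _ ≤ n ^ M := Nat.pow_le_pow_left hn M
  · rcases le_or_gt 4 M with hM | hM
    · calc 2 ^ n ≤ n ^ 4 := by interval_cases n <;> norm_num
        _ ≤ n ^ M := Nat.pow_le_pow_right (by omega) hM
    · interval_cases M <;> interval_cases n <;> norm_num at hsq ⊢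

end LowerCentralProfile

namespace Subgroup

variable {G : Type*} [Group G] {p M : ℕ} {e : ℕ → ℕ}
  (he : ∀ i, Nat.card (lowerCentralSeries (⊤ : Subgroup G) i) = p ^ e i)
include he

theorem pow_mul_relIndex_lowerCentralSeries {i j : ℕ} (hij : i ≤ j) :
    p ^ e j * (lowerCentralSeries (⊤ : Subgroup G) j).relIndex
      (lowerCentralSeries (⊤ : Subgroup G) i) = p ^ e i := by
  have key := relIndex_mul_relIndex ⊥ _ _ bot_le (lowerCentralSeries_antitone (⊤ : Subgroup G) hij)
  rwa [relIndex_bot_left, relIndex_bot_left, he, he] at key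

variable (hp : p.Prime)
include hp

theorem lowerCentralSeries_exponent_le {i j : ℕ} (hij : i ≤ j) : e j ≤ e i :=
  (Nat.pow_dvd_pow_iff_le_right hp.one_lt).mp
    ⟨_, (pow_mul_relIndex_lowerCentralSeries he hij).symm⟩

theorem relIndex_lowerCentralSeries {i j : ℕ} (hij : i ≤ j) :
    (lowerCentralSeries (⊤ : Subgroup G) j).relIndex (lowerCentralSeries (⊤ : Subgroup G) i) =
      p ^ (e i - e j) := by
  refine Nat.eq_of_mul_eq_mul_left (pow_pos hp.pos (e j)) ?_
  rw [pow_mul_relIndex_lowerCentralSeries he hij, ← pow_add,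
    Nat.add_sub_cancel' (lowerCentralSeries_exponent_le he hp hij)]

variable (hM : ∀ (A : Subgroup G) (B : Subgroup A), B.Normal → _root_.commutator A ≤ B →
  Nat.card (A ⧸ B) < p ^ (M + 1))
include hM

theorem le_add_of_commutator_lowerCentralSeries_le {i j : ℕ} (hij : i ≤ j)
    (hc : ⁅lowerCentralSeries (⊤ : Subgroup G) i, lowerCentralSeries (⊤ : Subgroup G) i⁆ ≤
      lowerCentralSeries (⊤ : Subgroup G) j) :
    e i ≤ e j + M := by
  have hlt := hM _ _ inferInstance (commutator_le_subgroupOf hc)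
  rw [← index_eq_card, ← relIndex, relIndex_lowerCentralSeries he hp hij,
    Nat.pow_lt_pow_iff_right hp.one_lt] at hlt
  omega

theorem lowerCentralProfile [Group.IsNilpotent G] : LowerCentralProfile e M where
  antitone _ _ hij := lowerCentralSeries_exponent_le he hp hij
  eq_zero_of_succ_eq i hi := by
    have hidx := relIndex_lowerCentralSeries he hp (Nat.le_add_right i 1)
    rw [hi, Nat.sub_self, pow_zero, relIndex_eq_one] at hidx
    have hbot := lowerCentralSeries_eq_bot_of_succ_eq
      (le_antisymm (lowerCentralSeries_antitone ⊤ (Nat.le_add_right i 1)) hidx)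
    have hcard := he i
    rw [hbot, card_bot, eq_comm, Nat.pow_eq_one] at hcard
    exact hcard.resolve_left hp.ne_one
  le_add i :=
    le_add_of_commutator_lowerCentralSeries_le he hp hM (by omega)
      (two_mul i ▸ commutator_lowerCentralSeries_le i i)
  le_add_of_eq_succ_add_one i hi := by
    have hidx := relIndex_lowerCentralSeries he hp (Nat.le_add_right i 1)
    rw [hi, Nat.add_sub_cancel_left, pow_one] at hidx
    obtain ⟨x, hx⟩ := exists_eq_zpowers_sup_of_relIndex_prime
      (lowerCentralSeries_antitone ⊤ (Nat.le_add_right i 1)) (hidx ▸ hp)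
    refine le_add_of_commutator_lowerCentralSeries_le he hp hM (by omega)
      (commutator_le_of_eq_zpowers_sup hx ?_)
    simpa only [two_mul, add_assoc] using commutator_lowerCentralSeries_le i (i + 1)

end Subgroup

theorem div_logb_le_of_two_pow_le_pow {n m : ℕ} (hn : 2 ≤ n) (h : 2 ^ n ≤ n ^ m) :
    (n : ℝ) / Real.logb 2 n ≤ m := by
  have hn1 : (1 : ℝ) < n := by exact_mod_cast hn
  have hlog := Real.log_le_log (by positivity) (by exact_mod_cast h : ((2 ^ n : ℕ) : ℝ) ≤ n ^ m)
  rw [div_le_iff₀ (Real.logb_pos one_lt_two hn1), Real.logb, mul_div_assoc',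
    le_div_iff₀ (Real.log_pos one_lt_two)]
  simpa [Real.log_pow] using hlog

theorem two_pow_le_pow_of_forall_abelian_section_card_lt {G : Type*} [Group G] {p n M : ℕ}
    (hp : p.Prime) (hn : 2 ≤ n) (hcard : Nat.card G = p ^ n)
    (hM : ∀ (A : Subgroup G) (B : Subgroup A), B.Normal → commutator A ≤ B →
      Nat.card (A ⧸ B) < p ^ (M + 1)) :
    2 ^ n ≤ n ^ M := by
  have : Fact p.Prime := ⟨hp⟩
  have : Finite G := Nat.finite_of_card_ne_zero (by rw [hcard]; exact pow_ne_zero _ hp.ne_zero)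
  have hG : IsPGroup p G := IsPGroup.of_card hcard
  have : Group.IsNilpotent G := hG.isNilpotent
  choose e he using fun i ↦
    IsPGroup.iff_card.mp (hG.to_subgroup ((⊤ : Subgroup G).lowerCentralSeries i))
  have he0 : e 0 = n := Nat.pow_right_injective hp.two_le <| by
    simp only [← he 0, Subgroup.lowerCentralSeries_zero, Subgroup.card_top, hcard]
  subst he0
  exact (Subgroup.lowerCentralProfile he hp hM).two_pow_le_pow hn

theorem pGroup_exists_large_abelian_section_general {G : Type*} [Group G]
    (p n : ℕ) (hp : p.Prime) (hn : 2 ≤ n) (hcard : Nat.card G = p ^ n) :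
    ∃ (A : Subgroup G) (B : Subgroup A), B.Normal ∧ commutator ↥A ≤ B ∧
      (Nat.card (↥A ⧸ B) : ℝ) ≥ (p : ℝ) ^ ((n : ℝ) / Real.logb 2 n) := by
  by_contra! hsmall
  set x := (n : ℝ) / Real.logb 2 n
  have hx : 0 < x := div_pos (by positivity) (Real.logb_pos one_lt_two (by exact_mod_cast hn))
  obtain ⟨M, hMx⟩ : ∃ M, ⌈x⌉₊ = M + 1 :=
    ⟨⌈x⌉₊ - 1, by have := Nat.ceil_pos.mpr hx; omega⟩
  have hM : ∀ (A : Subgroup G) (B : Subgroup A), B.Normal → commutator A ≤ B →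
      Nat.card (A ⧸ B) < p ^ (M + 1) := fun A B hB hAB ↦ by
    have hle : (p : ℝ) ^ x ≤ (p : ℝ) ^ (M + 1 : ℕ) := by
      rw [← Real.rpow_natCast, ← hMx]
      exact Real.rpow_le_rpow_of_exponent_le (by exact_mod_cast hp.one_le) (Nat.le_ceil x)
    exact_mod_cast (hsmall A B hB hAB).trans_le hle
  have hxM : x ≤ M := div_logb_le_of_two_pow_le_pow hn
    (two_pow_le_pow_of_forall_abelian_section_card_lt hp hn hcard hM)
  have hceil : (⌈x⌉₊ : ℝ) < x + 1 := Nat.ceil_lt_add_one hx.le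
  rw [hMx, Nat.cast_add_one] at hceil
  linarith

/-- Let `p` be a prime and `G` a finite group of order `p ^ n` with `n ≥ 2`.  Then `G`
has an abelian section of size at least `p ^ (n / log₂ n)`. -/
theorem pGroup_exists_large_abelian_section {G : Type*} [Group G] [Fintype G]
    (p n : ℕ) (hp : p.Prime) (hn : 2 ≤ n) (hcard : Nat.card G = p ^ n) :
    ∃ (A : Subgroup G) (B : Subgroup A), B.Normal ∧ commutator ↥A ≤ B ∧
      (Nat.card (↥A ⧸ B) : ℝ) ≥ (p : ℝ) ^ ((n : ℝ) / Real.logb 2 n) :=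
  pGroup_exists_large_abelian_section_general p n hp hn hcard
end

section
/- Let k ≥ 1 and let a₁, ..., a_k, b₁, ..., b_k be integers with each a_i ≥ 8 and each b_i ≥ 1. Set S = Σ_{i=1}^k b_i·(a_i·log₂ a_i + log₂ b_i). Then (1/2)·Σ_{i=1}^k a_i·b_i ≥ S / (2·log₂ S). -/
/-- Let `k ≥ 1` and let `a i ≥ 8`, `b i ≥ 1` be integers for `i = 1, ..., k`.  Setting
`S = ∑ i, b i * (a i * log₂ (a i) + log₂ (b i))`, we have
`(1/2) * ∑ i, a i * b i ≥ S / (2 * log₂ S)`. -/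
theorem half_sum_ab_ge (k : ℕ) (hk : 1 ≤ k) (a b : Fin k → ℕ)
    (ha : ∀ i, 8 ≤ a i) (hb : ∀ i, 1 ≤ b i) :
    (1 / 2 : ℝ) * ∑ i : Fin k, (a i : ℝ) * (b i : ℝ) ≥
      (∑ i : Fin k, (b i : ℝ) * ((a i : ℝ) * Real.logb 2 (a i) + Real.logb 2 (b i))) /
        (2 * Real.logb 2
          (∑ i : Fin k, (b i : ℝ) * ((a i : ℝ) * Real.logb 2 (a i) + Real.logb 2 (b i)))) := by
  set f : Fin k → ℝ := fun i => (b i : ℝ) * ((a i : ℝ) * Real.logb 2 (a i) + Real.logb 2 (b i))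
    with hf
  set S := ∑ i : Fin k, f i with hS
  set T := ∑ i : Fin k, (a i : ℝ) * (b i : ℝ) with hT
  have ha1 : ∀ i, (8:ℝ) ≤ (a i : ℝ) := fun i => by exact_mod_cast ha i
  have hb1 : ∀ i, (1:ℝ) ≤ (b i : ℝ) := fun i => by exact_mod_cast hb i
  have hlog8 : Real.logb 2 (8:ℝ) = 3 := by
    rw [show (8:ℝ) = (2:ℝ) ^ (3:ℝ) by
      rw [show (3:ℝ) = ((3:ℕ):ℝ) by norm_num, Real.rpow_natCast]; norm_num]
    exact Real.logb_rpow (by norm_num) (by norm_num)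
  have hloga : ∀ i, (3:ℝ) ≤ Real.logb 2 (a i) := by
    intro i
    rw [← hlog8]
    exact Real.logb_le_logb_of_le (by norm_num : (1:ℝ) < 2) (by norm_num) (ha1 i)
  have hlogb0 : ∀ i, 0 ≤ Real.logb 2 (b i) := fun i =>
    Real.logb_nonneg one_lt_two (hb1 i)
  have hterm_lb : ∀ i, 3 * ((a i : ℝ) * b i) ≤ f i := by
    intro i
    have h1 := ha1 i; have h2 := hb1 i; have h3 := hloga i; have h4 := hlogb0 i
    simp only [hf]
    nlinarith [mul_nonneg (mul_nonneg (by linarith : (0:ℝ) ≤ (a i:ℝ)) (by linarith : (0:ℝ) ≤ (b i:ℝ))) (by linarith : (0:ℝ) ≤ Real.logb 2 (a i) - 3), mul_nonneg (by linarith : (0:ℝ) ≤ (b i:ℝ)) h4]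
  have hterm_nonneg : ∀ i, 0 ≤ f i := fun i =>
    le_trans (by nlinarith [ha1 i, hb1 i]) (hterm_lb i)
  have hSi : ∀ i, f i ≤ S := by
    intro i
    exact Finset.single_le_sum (fun j _ => hterm_nonneg j) (Finset.mem_univ i)
  have hab_le_S : ∀ i, (a i : ℝ) * b i ≤ S := by
    intro i
    have := hterm_lb i
    have := hSi i
    nlinarith [ha1 i, hb1 i]
  have hS24 : 24 ≤ S := by
    obtain ⟨i⟩ : Nonempty (Fin k) := ⟨⟨0, hk⟩⟩
    have := hterm_lb i
    have := hSi i
    nlinarith [ha1 i, hb1 i]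
  have hlogS : 1 < Real.logb 2 S := by
    have : Real.logb 2 2 < Real.logb 2 S :=
      Real.logb_lt_logb (by norm_num) (by norm_num) (by linarith)
    simpa using this
  have hterm_ub : ∀ i, f i ≤ (a i : ℝ) * b i * Real.logb 2 S := by
    intro i
    have h1 := ha1 i; have h2 := hb1 i; have h4 := hlogb0 i
    have hloga0 : 0 ≤ Real.logb 2 (a i) := by linarith [hloga i]
    have hmul : Real.logb 2 ((a i : ℝ) * b i) = Real.logb 2 (a i) + Real.logb 2 (b i) :=
      Real.logb_mul (by linarith) (by linarith)
    have hmono : Real.logb 2 ((a i : ℝ) * b i) ≤ Real.logb 2 S :=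
      Real.logb_le_logb_of_le (by norm_num : (1:ℝ) < 2) (by nlinarith) (hab_le_S i)
    rw [hmul] at hmono
    simp only [hf]
    nlinarith [mul_nonneg (mul_nonneg (by linarith : (0:ℝ) ≤ (b i:ℝ)) (by linarith : (0:ℝ) ≤ (a i:ℝ) - 1)) h4, mul_nonneg (mul_nonneg (by linarith : (0:ℝ) ≤ (a i:ℝ)) (by linarith : (0:ℝ) ≤ (b i:ℝ))) (by linarith : (0:ℝ) ≤ Real.logb 2 S - (Real.logb 2 (a i) + Real.logb 2 (b i)))]
  have hS_ub : S ≤ T * Real.logb 2 S := by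
    rw [hS, hT, Finset.sum_mul]
    exact Finset.sum_le_sum fun i _ => hterm_ub i
  rw [ge_iff_le, div_le_iff₀ (by positivity)]
  nlinarith
end
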